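/- arXiv:math/0008090 — 2 statements merged into one kernel-verified Lean document; each statement's English description precedes it below -/
import Mathlib

section
/- For every A ⊆ I_n and every pair of distinct elements i, j ∈ I_n \ A, the commutator identity Σ_{C ⊆ A, D ⊆ A} [u(C∪{i}), u(D∪{j})] = (Σ_{E ⊆ A} u(E∪{i,j})) · (Σ_{F ⊆ A} (u(F∪{i}) − u(F∪{j}))) holds in Q_n, where [x,y] = xy − yx. -/
/-- Index type for the generators `z_{A,i}` of `Qₙ`: pairs `(A, i)` with
`A ⊆ Iₙ` and `i ∉ A`. -/
abbrev QIdx (n : ℕ) := {p : Finset (Fin n) × Fin n // p.2 ∉ p.1}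

/-- The defining relations of the algebra `Qₙ`:
additive relations `z_{A∪{i},j} + z_{A,i} = z_{A∪{j},i} + z_{A,j}` and
multiplicative relations `z_{A∪{i},j} · z_{A,i} = z_{A∪{j},i} · z_{A,j}`. -/
inductive QnRel (K : Type*) [Field K] (n : ℕ) :
    FreeAlgebra K (QIdx n) → FreeAlgebra K (QIdx n) → Prop
  | add (A : Finset (Fin n)) (i j : Fin n) (hi : i ∉ A) (hj : j ∉ A) (hij : i ≠ j) :
      QnRel K n
        (FreeAlgebra.ι K (⟨(insert i A, j), by simp [Finset.mem_insert, hij.symm, hj]⟩ : QIdx n)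
          + FreeAlgebra.ι K (⟨(A, i), hi⟩ : QIdx n))
        (FreeAlgebra.ι K (⟨(insert j A, i), by simp [Finset.mem_insert, hij, hi]⟩ : QIdx n)
          + FreeAlgebra.ι K (⟨(A, j), hj⟩ : QIdx n))
  | mul (A : Finset (Fin n)) (i j : Fin n) (hi : i ∉ A) (hj : j ∉ A) (hij : i ≠ j) :
      QnRel K n
        (FreeAlgebra.ι K (⟨(insert i A, j), by simp [Finset.mem_insert, hij.symm, hj]⟩ : QIdx n)
          * FreeAlgebra.ι K (⟨(A, i), hi⟩ : QIdx n))
        (FreeAlgebra.ι K (⟨(insert j A, i), by simp [Finset.mem_insert, hij, hi]⟩ : QIdx n)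
          * FreeAlgebra.ι K (⟨(A, j), hj⟩ : QIdx n))

/-- The algebra `Qₙ`: the quotient of the free associative unital `K`-algebra on the
generators `z_{A,i}` by the two-sided ideal generated by the defining relations. -/
abbrev Qn (K : Type*) [Field K] (n : ℕ) := RingQuot (QnRel K n)

/-- The image `z_{A,i}` of a generator in `Qₙ` (junk value `0` if `i ∈ A`). -/
noncomputable def zQ (K : Type*) [Field K] (n : ℕ) (A : Finset (Fin n)) (i : Fin n) : Qn K n :=
  if h : i ∉ A then RingQuot.mkAlgHom K (QnRel K n) (FreeAlgebra.ι K (⟨(A, i), h⟩ : QIdx n))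
  else 0

/-- The element `u(A) = Σ_{D ⊆ A \ {i}} (−1)^{|A|−|D|} z_{D,i}` for the choice `i = min A`
(for nonempty `A`), with `u(∅) = 1`. -/
noncomputable def uQ (K : Type*) [Field K] (n : ℕ) (A : Finset (Fin n)) : Qn K n :=
  if h : A.Nonempty then
    ∑ D ∈ (A.erase (A.min' h)).powerset,
      (-1 : Qn K n) ^ (A.card - D.card) * zQ K n D (A.min' h)
  else 1

/-- The relations defining `Q(F)`: each `u(A)` with nonempty `A ∉ F` is set to `0`. -/
inductive QcRel (K : Type*) [Field K] (n : ℕ) (F : Set (Finset (Fin n))) :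
    Qn K n → Qn K n → Prop
  | rel (A : Finset (Fin n)) (hA : A.Nonempty) (hAF : A ∉ F) : QcRel K n F (uQ K n A) 0

/-- The algebra `Q(F)`: the quotient of `Qₙ` by the two-sided ideal generated by all
`u(A)` with nonempty `A ∉ F`. -/
abbrev Qc (K : Type*) [Field K] (n : ℕ) (F : Set (Finset (Fin n))) := RingQuot (QcRel K n F)

/-- The image of `u(A)` in `Q(F)`. -/
noncomputable def uc (K : Type*) [Field K] (n : ℕ) (F : Set (Finset (Fin n)))
    (A : Finset (Fin n)) : Qc K n F :=
  RingQuot.mkAlgHom K (QcRel K n F) (uQ K n A)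

section RelFiveAux

open Finset

variable {K : Type*} [Field K] {n : ℕ}

lemma zQ_eq (A : Finset (Fin n)) (i : Fin n) (h : i ∉ A) :
    zQ K n A i = RingQuot.mkAlgHom K (QnRel K n) (FreeAlgebra.ι K (⟨(A, i), h⟩ : QIdx n)) := by
  simp [zQ, h]

lemma zQ_add_rel (A : Finset (Fin n)) (i j : Fin n) (hi : i ∉ A) (hj : j ∉ A) (hij : i ≠ j) :
    zQ K n (insert i A) j + zQ K n A i = zQ K n (insert j A) i + zQ K n A j := by
  rw [zQ_eq (insert i A) j (by simp [Finset.mem_insert, hij.symm, hj]),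
    zQ_eq A i hi, zQ_eq (insert j A) i (by simp [Finset.mem_insert, hij, hi]),
    zQ_eq A j hj, ← map_add, ← map_add]
  exact RingQuot.mkAlgHom_rel K (QnRel.add A i j hi hj hij)

lemma zQ_mul_rel (A : Finset (Fin n)) (i j : Fin n) (hi : i ∉ A) (hj : j ∉ A) (hij : i ≠ j) :
    zQ K n (insert i A) j * zQ K n A i = zQ K n (insert j A) i * zQ K n A j := by
  rw [zQ_eq (insert i A) j (by simp [Finset.mem_insert, hij.symm, hj]),
    zQ_eq A i hi, zQ_eq (insert j A) i (by simp [Finset.mem_insert, hij, hi]),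
    zQ_eq A j hj, ← map_mul, ← map_mul]
  exact RingQuot.mkAlgHom_rel K (QnRel.mul A i j hi hj hij)

/-- `u(A)` computed with an arbitrary pivot `i ∈ A`. -/
noncomputable def vQ (K : Type*) [Field K] (n : ℕ) (A : Finset (Fin n)) (i : Fin n) : Qn K n :=
  ∑ D ∈ (A.erase i).powerset, (-1 : Qn K n) ^ (A.card - D.card) * zQ K n D i

lemma pow_succ_neg_one {R : Type*} [Ring R] (k : ℕ) : (-1 : R) ^ (k + 1) = -(-1 : R) ^ k := by
  rw [pow_succ, mul_neg_one]

lemma pow_succ_neg_one_mul {R : Type*} [Ring R] (k : ℕ) (z : R) :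
    (-1 : R) ^ (k + 1) * z = -((-1 : R) ^ k * z) := by
  rw [pow_succ, mul_neg_one, neg_mul]

lemma neg_one_mul' {R : Type*} [Ring R] (z : R) : (-1 : R) * z = -z := neg_one_mul z

lemma final_aux {R : Type*} [Ring R] (a b c d : R) (hadd : d + a = c + b)
    (hmul : d * a = c * b) :
    -a * -b - -b * -a = (a - c) * (-a - -b) := by
  have hcb : c * b = (c + b - a) * a := by
    rw [← hmul]
    congr 1
    exact eq_sub_of_add_eq hadd
  have expand : (a - c) * (-a - -b) = a * b - a * a - c * b + c * a := by noncomm_ring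
  rw [expand, hcb]
  noncomm_ring

lemma combine_aux {R : Type*} [Ring R] (s a b c' d' : R) (h : d' + a = c' + b) :
    s * -1 * a + s * c' = s * -1 * b + s * d' := by
  have hc : c' = d' + a - b := eq_sub_of_add_eq h.symm
  rw [hc]; noncomm_ring

lemma vQ_pivot (A : Finset (Fin n)) (i j : Fin n) (hi : i ∈ A) (hj : j ∈ A) :
    vQ K n A i = vQ K n A j := by
  rcases eq_or_ne i j with rfl | hij
  · rfl
  set B := (A.erase i).erase j with hB
  have hBj : A.erase i = insert j B :=
    (Finset.insert_erase (Finset.mem_erase.mpr ⟨hij.symm, hj⟩)).symm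
  have hBi : A.erase j = insert i B := by
    rw [hB, Finset.erase_right_comm]
    exact (Finset.insert_erase (Finset.mem_erase.mpr ⟨hij, hi⟩)).symm
  have hjB : j ∉ B := Finset.notMem_erase j _
  have hiB : i ∉ B := by
    rw [hB, Finset.erase_right_comm]; exact Finset.notMem_erase i _
  unfold vQ
  rw [hBj, hBi, Finset.sum_powerset_insert hjB, Finset.sum_powerset_insert hiB,
    ← Finset.sum_add_distrib, ← Finset.sum_add_distrib]
  refine Finset.sum_congr rfl fun D hD => ?_
  have hDB : D ⊆ B := Finset.mem_powerset.mp hD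
  have hiD : i ∉ D := fun h => hiB (hDB h)
  have hjD : j ∉ D := fun h => hjB (hDB h)
  have hsub : insert i (insert j D) ⊆ A := by
    refine Finset.insert_subset hi (Finset.insert_subset hj ?_)
    exact hDB.trans ((Finset.erase_subset _ _).trans (Finset.erase_subset _ _))
  have hcard : D.card + 2 ≤ A.card := by
    have h1 := Finset.card_le_card hsub
    rw [Finset.card_insert_of_notMem (by simp [Finset.mem_insert, hij, hiD]),
      Finset.card_insert_of_notMem hjD] at h1
    omega
  rw [Finset.card_insert_of_notMem hjD, Finset.card_insert_of_notMem hiD]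
  have hpow : (-1 : Qn K n) ^ (A.card - D.card)
      = (-1 : Qn K n) ^ (A.card - (D.card + 1)) * -1 := by
    rw [← pow_succ]
    congr 1
    omega
  rw [hpow]
  exact combine_aux _ _ _ _ _ (zQ_add_rel D i j hiD hjD hij)

lemma uQ_eq_vQ (A : Finset (Fin n)) (h : A.Nonempty) (i : Fin n) (hi : i ∈ A) :
    uQ K n A = vQ K n A i := by
  rw [uQ, dif_pos h]
  exact vQ_pivot A (A.min' h) i (A.min'_mem h) hi

lemma uQ_insert (C : Finset (Fin n)) (i : Fin n) (hiC : i ∉ C) :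
    uQ K n (insert i C)
      = ∑ D ∈ C.powerset, (-1 : Qn K n) ^ (C.card + 1 - D.card) * zQ K n D i := by
  rw [uQ_eq_vQ (insert i C) (Finset.insert_nonempty i C) i (Finset.mem_insert_self i C)]
  unfold vQ
  rw [Finset.erase_insert hiC, Finset.card_insert_of_notMem hiC]

lemma neg_one_pow_sum {R : Type*} [Ring R] (x : Finset (Fin n)) :
    ∑ m ∈ x.powerset, (-1 : R) ^ m.card = if x = ∅ then 1 else 0 := by
  classical
  induction x using Finset.induction with
  | empty => simp
  | @insert a s ha ih =>
    rw [Finset.sum_powerset_insert ha]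
    have h2 : ∑ t ∈ s.powerset, (-1 : R) ^ (insert a t).card
        = ∑ t ∈ s.powerset, -(-1 : R) ^ t.card := by
      refine Finset.sum_congr rfl fun t ht => ?_
      rw [Finset.card_insert_of_notMem (fun h => ha (Finset.mem_powerset.mp ht h)),
        pow_succ, mul_neg_one]
    rw [h2, Finset.sum_neg_distrib, ih]
    simp [Finset.insert_ne_empty]

lemma filter_sign_sum (A D : Finset (Fin n)) (hD : D ⊆ A) :
    ∑ C ∈ A.powerset.filter (fun C => D ⊆ C), (-1 : Qn K n) ^ (C.card + 1 - D.card)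
      = if D = A then -1 else 0 := by
  classical
  have key : ∀ C ∈ A.powerset.filter (fun C => D ⊆ C),
      (-1 : Qn K n) ^ (C.card + 1 - D.card) = -(-1 : Qn K n) ^ (C \ D).card := by
    intro C hC
    simp only [Finset.mem_filter, Finset.mem_powerset] at hC
    rw [Finset.card_sdiff_of_subset hC.2]
    have hle := Finset.card_le_card hC.2
    have he : C.card + 1 - D.card = (C.card - D.card) + 1 := by omega
    rw [he]
    exact pow_succ_neg_one _
  rw [Finset.sum_congr rfl key, Finset.sum_neg_distrib]
  have hbij : ∑ C ∈ A.powerset.filter (fun C => D ⊆ C), (-1 : Qn K n) ^ (C \ D).card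
      = ∑ E ∈ (A \ D).powerset, (-1 : Qn K n) ^ E.card := by
    refine Finset.sum_nbij' (fun C => C \ D) (fun E => E ∪ D) ?_ ?_ ?_ ?_ ?_
    · intro C hC
      simp only [Finset.mem_filter, Finset.mem_powerset] at hC ⊢
      exact Finset.sdiff_subset_sdiff hC.1 Finset.Subset.rfl
    · intro E hE
      simp only [Finset.mem_powerset] at hE
      simp only [Finset.mem_filter, Finset.mem_powerset]
      constructor
      · exact Finset.union_subset (hE.trans (Finset.sdiff_subset)) hD
      · exact Finset.subset_union_right
    · intro C hC
      simp only [Finset.mem_filter, Finset.mem_powerset] at hC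
      show C \ D ∪ D = C
      exact Finset.sdiff_union_of_subset hC.2
    · intro E hE
      simp only [Finset.mem_powerset] at hE
      show (E ∪ D) \ D = E
      rw [Finset.union_sdiff_right, Finset.sdiff_eq_self_of_disjoint]
      exact Finset.disjoint_of_subset_left hE Finset.sdiff_disjoint
    · intro C hC; rfl
  rw [hbij, neg_one_pow_sum]
  by_cases h : D = A
  · simp [h]
  · have : A \ D ≠ ∅ := by
      intro hcon
      exact h (Finset.Subset.antisymm hD (Finset.sdiff_eq_empty_iff_subset.mp hcon))
    simp [h, this]

lemma moebius (g : Finset (Fin n) → Qn K n) (A : Finset (Fin n)) :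
    ∑ C ∈ A.powerset, ∑ D ∈ C.powerset, (-1 : Qn K n) ^ (C.card + 1 - D.card) * g D
      = - g A := by
  classical
  have step1 : ∀ C ∈ A.powerset,
      ∑ D ∈ C.powerset, (-1 : Qn K n) ^ (C.card + 1 - D.card) * g D
        = ∑ D ∈ A.powerset,
            if D ⊆ C then (-1 : Qn K n) ^ (C.card + 1 - D.card) * g D else 0 := by
    intro C hC
    have hps : C.powerset = A.powerset.filter (fun D => D ⊆ C) := by
      ext D
      simp only [Finset.mem_filter, Finset.mem_powerset]
      exact ⟨fun h => ⟨h.trans (Finset.mem_powerset.mp hC), h⟩, fun h => h.2⟩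
    rw [hps, Finset.sum_filter]
  rw [Finset.sum_congr rfl step1, Finset.sum_comm]
  have step2 : ∀ D ∈ A.powerset,
      (∑ C ∈ A.powerset, if D ⊆ C then (-1 : Qn K n) ^ (C.card + 1 - D.card) * g D else 0)
        = if D = A then - g D else 0 := by
    intro D hD
    rw [← Finset.sum_filter, ← Finset.sum_mul,
      filter_sign_sum A D (Finset.mem_powerset.mp hD)]
    split_ifs
    · exact neg_one_mul' _
    · exact zero_mul _
  rw [Finset.sum_congr rfl step2, Finset.sum_ite_eq' A.powerset A (fun D => - g D)]
  simp

lemma sum_u_i (A : Finset (Fin n)) (i : Fin n) (hi : i ∉ A) :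
    ∑ C ∈ A.powerset, uQ K n (insert i C) = - zQ K n A i := by
  have h1 : ∀ C ∈ A.powerset, uQ K n (insert i C)
      = ∑ D ∈ C.powerset, (-1 : Qn K n) ^ (C.card + 1 - D.card) * zQ K n D i :=
    fun C hC => uQ_insert C i (fun h => hi (Finset.mem_powerset.mp hC h))
  rw [Finset.sum_congr rfl h1, moebius (fun D => zQ K n D i) A]

lemma sum_u_ij (A : Finset (Fin n)) (i j : Fin n) (hi : i ∉ A) (hj : j ∉ A) (hij : i ≠ j) :
    ∑ E ∈ A.powerset, uQ K n (insert i (insert j E))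
      = zQ K n A i - zQ K n (insert j A) i := by
  have expand : ∀ E ∈ A.powerset, uQ K n (insert i (insert j E))
      = (∑ D ∈ E.powerset, -((-1 : Qn K n) ^ (E.card + 1 - D.card) * zQ K n D i))
        + ∑ D ∈ E.powerset,
            (-1 : Qn K n) ^ (E.card + 1 - D.card) * zQ K n (insert j D) i := by
    intro E hE
    have hE' := Finset.mem_powerset.mp hE
    have hjE : j ∉ E := fun h => hj (hE' h)
    have hiE : i ∉ insert j E := by
      simp only [Finset.mem_insert, not_or]
      exact ⟨hij, fun h => hi (hE' h)⟩
    rw [uQ_insert (insert j E) i hiE, Finset.card_insert_of_notMem hjE,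
      Finset.sum_powerset_insert hjE]
    congr 1
    · refine Finset.sum_congr rfl fun D hD => ?_
      have hd : D.card ≤ E.card := Finset.card_le_card (Finset.mem_powerset.mp hD)
      have he : E.card + 1 + 1 - D.card = (E.card + 1 - D.card) + 1 := by omega
      rw [he]
      exact pow_succ_neg_one_mul _ _
    · refine Finset.sum_congr rfl fun D hD => ?_
      have hjD : j ∉ D := fun h => hjE (Finset.mem_powerset.mp hD h)
      have hd : D.card ≤ E.card := Finset.card_le_card (Finset.mem_powerset.mp hD)
      rw [Finset.card_insert_of_notMem hjD]
      congr 2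
      omega
  rw [Finset.sum_congr rfl expand, Finset.sum_add_distrib]
  have hA1 : ∑ E ∈ A.powerset,
      ∑ D ∈ E.powerset, -((-1 : Qn K n) ^ (E.card + 1 - D.card) * zQ K n D i)
      = zQ K n A i := by
    simp only [Finset.sum_neg_distrib]
    rw [moebius (fun D => zQ K n D i) A]
    simp
  rw [hA1, moebius (fun D => zQ K n (insert j D) i) A]
  abel

end RelFiveAux

/-- Relation (5_{A,i,j}):
`Σ_{C,D⊆A} [u(C∪{i}), u(D∪{j})] = (Σ_{E⊆A} u(E∪{i,j})) · Σ_{F⊆A} (u(F∪{i}) − u(F∪{j}))`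
holds in `Qₙ`, where `[x,y] = xy − yx`. -/
theorem relation_five (K : Type*) [Field K] (n : ℕ)
    (A : Finset (Fin n)) (i j : Fin n) (hi : i ∉ A) (hj : j ∉ A) (hij : i ≠ j) :
    ∑ C ∈ A.powerset, ∑ D ∈ A.powerset,
        (uQ K n (insert i C) * uQ K n (insert j D)
          - uQ K n (insert j D) * uQ K n (insert i C)) =
      (∑ E ∈ A.powerset, uQ K n (insert i (insert j E))) *
        ∑ G ∈ A.powerset, (uQ K n (insert i G) - uQ K n (insert j G)) := by
  classical
  set a := zQ K n A i with ha
  set b := zQ K n A j with hb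
  set c := zQ K n (insert j A) i with hc
  set d := zQ K n (insert i A) j with hd
  have hsi : ∑ C ∈ A.powerset, uQ K n (insert i C) = -a := sum_u_i A i hi
  have hsj : ∑ C ∈ A.powerset, uQ K n (insert j C) = -b := sum_u_i A j hj
  have hsij : ∑ E ∈ A.powerset, uQ K n (insert i (insert j E)) = a - c :=
    sum_u_ij A i j hi hj hij
  have hlhs : ∑ C ∈ A.powerset, ∑ D ∈ A.powerset,
      (uQ K n (insert i C) * uQ K n (insert j D)
        - uQ K n (insert j D) * uQ K n (insert i C))
      = (∑ C ∈ A.powerset, uQ K n (insert i C)) * (∑ D ∈ A.powerset, uQ K n (insert j D))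
        - (∑ D ∈ A.powerset, uQ K n (insert j D)) * (∑ C ∈ A.powerset, uQ K n (insert i C)) := by
    simp only [Finset.sum_sub_distrib]
    rw [← Finset.sum_mul_sum, Finset.sum_comm, ← Finset.sum_mul_sum]
  have hrhs : ∑ G ∈ A.powerset, (uQ K n (insert i G) - uQ K n (insert j G)) = -a - -b := by
    rw [Finset.sum_sub_distrib, hsi, hsj]
  rw [hlhs, hrhs, hsi, hsj, hsij]
  exact final_aux a b c d (zQ_add_rel A i j hi hj hij) (zQ_mul_rel A i j hi hj hij)
end

section
/- Let F be the zero-dimensional complex with n nodes, i.e. F consists exactly of all singletons {i}, i ∈ I_n. Then Q(F) is isomorphic as a k-algebra to the commutative polynomial algebra k[x_1,…,x_n] in n variables, via an isomorphism sending the image of u({i}) to x_i. -/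
/-- The zero-dimensional complex on `Iₙ`, consisting exactly of all singletons. -/
def zeroComplex (n : ℕ) : Set (Finset (Fin n)) := {A | ∃ i : Fin n, A = {i}}

/-!
Send every generator `z_{A,i}` to `-xᵢ`. The defining relations of `Qₙ` hold in `K[x]`, and `u(A)`
maps to an alternating sum of `-x_{min A}` over the subsets of `A \ {min A}`, which vanishes as
soon as `|A| ≥ 2`; so this map factors through `Q(F)`.

Conversely, let `v(B,i) = Σ_{D ⊆ B} (-1)^{|B|-|D|} z_{D,i}`. The additive relations say exactly
that `v(A \ {i}, i)` does not depend on the choice of `i ∈ A`, so `v(B,i) = -u(B ∪ {i})`, which is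
zero in `Q(F)` when `B ≠ ∅`. By Möbius inversion `z_{A,i} = Σ_{B ⊆ A} v(B,i)`, hence
`z_{A,i} = z_{∅,i} = -u({i})` in `Q(F)`. The multiplicative relation for `A = ∅` then says that the
`u({i})` commute, so `xᵢ ↦ u({i})` defines an inverse algebra map.
-/

open Finset MvPolynomial

section PowersetAlternatingSum

variable {R : Type*} [Ring R] {α : Type*}

theorem neg_one_pow_succ_mul (k : ℕ) (x : R) : (-1 : R) ^ (k + 1) * x = -((-1) ^ k * x) := by
  rw [pow_succ, mul_neg_one, neg_mul]

theorem Finset.sum_powerset_neg_one_pow_card_sub_card {B : Finset α} (hB : B.Nonempty) :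
    ∑ D ∈ B.powerset, (-1 : R) ^ (#B - #D) = 0 := by
  have h := sum_pow_mul_eq_add_pow (1 : ℤ) (-1) B
  rw [add_neg_cancel, zero_pow (card_ne_zero.2 hB)] at h
  simp only [one_pow, one_mul] at h
  exact_mod_cast congrArg (Int.cast : ℤ → R) h

theorem Finset.sum_powerset_sum_powerset_neg_one_pow_mul [DecidableEq α] (A : Finset α)
    (g : Finset α → R) :
    ∑ B ∈ A.powerset, ∑ D ∈ B.powerset, (-1 : R) ^ (#B - #D) * g D = g A := by
  induction A using Finset.induction_on generalizing g with
  | empty => simp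
  | insert a s ha ih =>
    have step : ∀ B ∈ s.powerset,
        ∑ D ∈ (insert a B).powerset, (-1 : R) ^ (#(insert a B) - #D) * g D
          = -∑ D ∈ B.powerset, (-1 : R) ^ (#B - #D) * g D
            + ∑ D ∈ B.powerset, (-1 : R) ^ (#B - #D) * g (insert a D) := by
      intro B hB
      have haB : a ∉ B := fun h => ha (mem_powerset.1 hB h)
      rw [sum_powerset_insert haB, card_insert_of_notMem haB, ← sum_neg_distrib]
      congr 1 <;> refine sum_congr rfl fun D hD => ?_
      · have := card_le_card (mem_powerset.1 hD)
        rw [show #B + 1 - #D = #B - #D + 1 by omega, neg_one_pow_succ_mul]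
      · have haD : a ∉ D := fun h => haB (mem_powerset.1 hD h)
        rw [card_insert_of_notMem haD, Nat.add_sub_add_right]
    rw [sum_powerset_insert ha, sum_congr rfl step, sum_add_distrib, sum_neg_distrib,
      add_neg_cancel_left, ih]

end PowersetAlternatingSum

section Qn

/-- On `Qₙ`, `-` is `RingQuot.instNeg` over the ring structure of `FreeAlgebra` while `*` is over
its semiring structure; they agree only after unfolding `Algebra.semiringToRing`, which instance
search does not do, so `HasDistribNeg` is supplied by hand. -/
instance Qn.instHasDistribNeg (K : Type*) [Field K] (n : ℕ) : HasDistribNeg (Qn K n) :=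
  inferInstanceAs (HasDistribNeg (RingQuot (QnRel K n)))

variable {K : Type*} [Field K] {n : ℕ} {A B : Finset (Fin n)} {i j : Fin n}

theorem zQ_of_notMem (h : i ∉ A) :
    zQ K n A i = RingQuot.mkAlgHom K (QnRel K n) (FreeAlgebra.ι K ⟨(A, i), h⟩) :=
  dif_pos h

theorem zQ_insert_sub_comm (hi : i ∉ A) (hj : j ∉ A) (hij : i ≠ j) :
    zQ K n (insert j A) i - zQ K n A i = zQ K n (insert i A) j - zQ K n A j := by
  rw [sub_eq_sub_iff_add_eq_add, zQ_of_notMem hi, zQ_of_notMem hj,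
    zQ_of_notMem (by simp [hij, hi] : i ∉ insert j A),
    zQ_of_notMem (by simp [hij.symm, hj] : j ∉ insert i A), ← map_add, ← map_add]
  exact (RingQuot.mkAlgHom_rel K (QnRel.add A i j hi hj hij)).symm

theorem zQ_insert_mul_comm (hi : i ∉ A) (hj : j ∉ A) (hij : i ≠ j) :
    zQ K n (insert i A) j * zQ K n A i = zQ K n (insert j A) i * zQ K n A j := by
  rw [zQ_of_notMem hi, zQ_of_notMem hj,
    zQ_of_notMem (by simp [hij, hi] : i ∉ insert j A),
    zQ_of_notMem (by simp [hij.symm, hj] : j ∉ insert i A), ← map_mul, ← map_mul]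
  exact RingQuot.mkAlgHom_rel K (QnRel.mul A i j hi hj hij)

variable (K n) in
noncomputable def zQDiff (B : Finset (Fin n)) (i : Fin n) : Qn K n :=
  ∑ D ∈ B.powerset, (-1 : Qn K n) ^ (#B - #D) * zQ K n D i

theorem zQDiff_insert_comm {S : Finset (Fin n)} (hi : i ∉ S) (hj : j ∉ S) (hij : i ≠ j) :
    zQDiff K n (insert j S) i = zQDiff K n (insert i S) j := by
  simp only [zQDiff, sum_powerset_insert hj, sum_powerset_insert hi, card_insert_of_notMem hj,
    card_insert_of_notMem hi, ← sum_add_distrib]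
  refine sum_congr rfl fun D hD => ?_
  have hDS := mem_powerset.1 hD
  have hiD : i ∉ D := fun h => hi (hDS h)
  have hjD : j ∉ D := fun h => hj (hDS h)
  have := card_le_card hDS
  rw [card_insert_of_notMem hjD, card_insert_of_notMem hiD, Nat.add_sub_add_right,
    show #S + 1 - #D = #S - #D + 1 by omega, neg_one_pow_succ_mul, neg_one_pow_succ_mul,
    neg_add_eq_sub, neg_add_eq_sub, ← mul_sub, ← mul_sub, zQ_insert_sub_comm hiD hjD hij]

theorem zQDiff_erase_eq_of_mem (hi : i ∈ A) (hj : j ∈ A) :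
    zQDiff K n (A.erase i) i = zQDiff K n (A.erase j) j := by
  obtain rfl | hij := eq_or_ne i j
  · rfl
  set S := (A.erase i).erase j with hS
  have hAi : A.erase i = insert j S := (insert_erase (mem_erase.2 ⟨hij.symm, hj⟩)).symm
  have hAj : A.erase j = insert i S := by
    rw [hS, erase_right_comm, insert_erase (mem_erase.2 ⟨hij, hi⟩)]
  rw [hAi, hAj]
  exact zQDiff_insert_comm (by simp [hS]) (by simp [hS]) hij

theorem uQ_eq_neg_zQDiff_erase (hi : i ∈ A) : uQ K n A = -zQDiff K n (A.erase i) i := by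
  have hA : A.Nonempty := ⟨i, hi⟩
  have hpos := card_pos.2 hA
  rw [zQDiff_erase_eq_of_mem hi (A.min'_mem hA), uQ, dif_pos hA, zQDiff, ← sum_neg_distrib]
  refine sum_congr rfl fun D hD => ?_
  have := card_le_card (mem_powerset.1 hD)
  rw [card_erase_of_mem (A.min'_mem hA)] at this ⊢
  rw [show #A - #D = #A - 1 - #D + 1 by omega, neg_one_pow_succ_mul]

theorem uQ_singleton (i : Fin n) : uQ K n {i} = -zQ K n ∅ i := by
  simp [uQ_eq_neg_zQDiff_erase (mem_singleton_self i), zQDiff]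

theorem sum_powerset_zQDiff (A : Finset (Fin n)) (i : Fin n) :
    ∑ B ∈ A.powerset, zQDiff K n B i = zQ K n A i :=
  sum_powerset_sum_powerset_neg_one_pow_mul A _

variable (K n) in
noncomputable def qnToMvPolynomial : Qn K n →ₐ[K] MvPolynomial (Fin n) K :=
  RingQuot.liftAlgHom K ⟨FreeAlgebra.lift K fun p : QIdx n => -X p.1.2, by
    intro x y h
    induction h <;> simp only [map_add, map_mul, FreeAlgebra.lift_ι_apply] <;> ring⟩

theorem qnToMvPolynomial_zQ (h : i ∉ A) : qnToMvPolynomial K n (zQ K n A i) = -X i := by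
  rw [zQ_of_notMem h, qnToMvPolynomial, RingQuot.liftAlgHom_mkAlgHom_apply,
    FreeAlgebra.lift_ι_apply]

theorem qnToMvPolynomial_zQDiff (hi : i ∉ B) (hB : B.Nonempty) :
    qnToMvPolynomial K n (zQDiff K n B i) = 0 := by
  rw [zQDiff, map_sum]
  calc ∑ D ∈ B.powerset, qnToMvPolynomial K n ((-1) ^ (#B - #D) * zQ K n D i)
      = ∑ D ∈ B.powerset, (-1) ^ (#B - #D) * -X i := sum_congr rfl fun D hD => by
        rw [map_mul, map_pow, map_neg, map_one,
          qnToMvPolynomial_zQ fun h => hi (mem_powerset.1 hD h)]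
    _ = 0 := by rw [← sum_mul, sum_powerset_neg_one_pow_card_sub_card hB, zero_mul]

theorem qnToMvPolynomial_uQ_of_nontrivial (hA : A.Nontrivial) :
    qnToMvPolynomial K n (uQ K n A) = 0 := by
  obtain ⟨i, hi⟩ := hA.nonempty
  rw [uQ_eq_neg_zQDiff_erase hi, map_neg,
    qnToMvPolynomial_zQDiff (notMem_erase i A) hA.erase_nonempty, neg_zero]

end Qn

section ZeroComplex

variable {K : Type*} [Field K] {n : ℕ} {A B : Finset (Fin n)} {i j : Fin n}

theorem mkAlgHom_uQ_of_nontrivial (hA : A.Nontrivial) :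
    RingQuot.mkAlgHom K (QcRel K n (zeroComplex n)) (uQ K n A) = 0 :=
  (RingQuot.mkAlgHom_rel K
    (QcRel.rel A hA.nonempty (by rintro ⟨_, h⟩; exact hA.ne_singleton h))).trans (map_zero _)

theorem mkAlgHom_zQDiff (hi : i ∉ B) (hB : B.Nonempty) :
    RingQuot.mkAlgHom K (QcRel K n (zeroComplex n)) (zQDiff K n B i) = 0 := by
  obtain ⟨b, hb⟩ := hB
  have hbi : b ≠ i := fun h => hi (h ▸ hb)
  have hu := uQ_eq_neg_zQDiff_erase (K := K) (mem_insert_self i B)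
  rw [erase_insert hi] at hu
  have h := congrArg (RingQuot.mkAlgHom K (QcRel K n (zeroComplex n))) hu
  rwa [mkAlgHom_uQ_of_nontrivial ⟨i, mem_insert_self i B, b, mem_insert_of_mem hb, hbi.symm⟩,
    map_neg, eq_comm, neg_eq_zero] at h

theorem mkAlgHom_zQ_eq_zQ_empty (hi : i ∉ A) :
    RingQuot.mkAlgHom K (QcRel K n (zeroComplex n)) (zQ K n A i)
      = RingQuot.mkAlgHom K (QcRel K n (zeroComplex n)) (zQ K n ∅ i) := by
  rw [← sum_powerset_zQDiff, map_sum, sum_eq_single_of_mem ∅ (empty_mem_powerset A)]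
  · simp [zQDiff]
  · intro B hB hne
    exact mkAlgHom_zQDiff (fun h => hi (mem_powerset.1 hB h)) (nonempty_iff_ne_empty.2 hne)

theorem mkAlgHom_zQ_eq_neg_uc (hi : i ∉ A) :
    RingQuot.mkAlgHom K (QcRel K n (zeroComplex n)) (zQ K n A i)
      = -uc K n (zeroComplex n) {i} := by
  rw [mkAlgHom_zQ_eq_zQ_empty hi, uc, ← neg_neg (zQ K n ∅ i), ← uQ_singleton, map_neg]

theorem uc_singleton_mul_comm (i j : Fin n) :
    uc K n (zeroComplex n) {i} * uc K n (zeroComplex n) {j}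
      = uc K n (zeroComplex n) {j} * uc K n (zeroComplex n) {i} := by
  obtain rfl | hij := eq_or_ne i j
  · rfl
  have h := congrArg (RingQuot.mkAlgHom K (QcRel K n (zeroComplex n)))
    (zQ_insert_mul_comm (K := K) (notMem_empty i) (notMem_empty j) hij)
  simp only [map_mul, insert_empty_eq] at h
  rw [mkAlgHom_zQ_eq_zQ_empty (A := {i}) (by simpa using hij.symm),
    mkAlgHom_zQ_eq_zQ_empty (A := {j}) (by simpa using hij)] at h
  rw [uc, uc, ← map_mul, ← map_mul, uQ_singleton, uQ_singleton, neg_mul_neg, neg_mul_neg,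
    map_mul, map_mul, h]

variable (K n)

noncomputable def qcToMvPolynomial : Qc K n (zeroComplex n) →ₐ[K] MvPolynomial (Fin n) K :=
  RingQuot.liftAlgHom K ⟨qnToMvPolynomial K n, by
    rintro _ _ ⟨A, hA, hAF⟩
    rw [map_zero, qnToMvPolynomial_uQ_of_nontrivial
      (hA.exists_eq_singleton_or_nontrivial.resolve_left hAF)]⟩

open scoped IsMulCommutative in
/-- The `u({i})` commute pairwise in `Q(F)`, so `K[x]` maps to the commutative subalgebra they
generate. -/
noncomputable def mvPolynomialToQc : MvPolynomial (Fin n) K →ₐ[K] Qc K n (zeroComplex n) :=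
  let S := Algebra.adjoin K (Set.range fun i => uc K n (zeroComplex n) {i})
  haveI : IsMulCommutative S := Algebra.isMulCommutative_adjoin K
    (by rintro _ ⟨i, rfl⟩ _ ⟨j, rfl⟩; exact uc_singleton_mul_comm i j)
  S.val.comp (aeval fun i => (⟨uc K n (zeroComplex n) {i}, Algebra.subset_adjoin ⟨i, rfl⟩⟩ : S))

variable {K n}

theorem qcToMvPolynomial_mkAlgHom (x : Qn K n) :
    qcToMvPolynomial K n (RingQuot.mkAlgHom K (QcRel K n (zeroComplex n)) x)
      = qnToMvPolynomial K n x :=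
  RingQuot.liftAlgHom_mkAlgHom_apply _ _ _ _

theorem qcToMvPolynomial_uc_singleton (i : Fin n) :
    qcToMvPolynomial K n (uc K n (zeroComplex n) {i}) = X i := by
  rw [uc, qcToMvPolynomial_mkAlgHom, uQ_singleton, map_neg,
    qnToMvPolynomial_zQ (notMem_empty i), neg_neg]

theorem mvPolynomialToQc_X (i : Fin n) :
    mvPolynomialToQc K n (X i) = uc K n (zeroComplex n) {i} := by
  simp [mvPolynomialToQc]

theorem qcToMvPolynomial_comp_mvPolynomialToQc :
    (qcToMvPolynomial K n).comp (mvPolynomialToQc K n) = AlgHom.id K _ :=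
  algHom_ext fun i => by
    rw [AlgHom.comp_apply, mvPolynomialToQc_X, qcToMvPolynomial_uc_singleton, AlgHom.id_apply]

theorem mvPolynomialToQc_comp_qcToMvPolynomial :
    (mvPolynomialToQc K n).comp (qcToMvPolynomial K n) = AlgHom.id K _ := by
  ext ⟨⟨A, i⟩, hi : i ∉ A⟩
  simp only [Function.comp_apply, AlgHom.comp_apply, AlgHom.id_apply, ← zQ_of_notMem hi]
  rw [qcToMvPolynomial_mkAlgHom, qnToMvPolynomial_zQ hi, map_neg, mvPolynomialToQc_X,
    mkAlgHom_zQ_eq_neg_uc hi]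

end ZeroComplex

/-- For the zero-dimensional complex `F` (all singletons), `Q(F)` is isomorphic as a
`K`-algebra to the commutative polynomial algebra `K[x₁,…,xₙ]`, via an isomorphism
sending `u({i})` to `xᵢ`. -/
theorem zero_dim_iso_polynomial (K : Type*) [Field K] (n : ℕ) :
    ∃ e : Qc K n (zeroComplex n) ≃ₐ[K] MvPolynomial (Fin n) K,
      ∀ i : Fin n, e (uc K n (zeroComplex n) {i}) = MvPolynomial.X i :=
  ⟨AlgEquiv.ofAlgHom _ _ qcToMvPolynomial_comp_mvPolynomialToQc
      mvPolynomialToQc_comp_qcToMvPolynomial,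
    qcToMvPolynomial_uc_singleton⟩
end
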